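/- Let (I)_{I ∈ 𝓘} be a finite family of pairwise disjoint intervals in ℝ, each satisfying (1/|I|)∫_ℝ 1_F(x) χ̃_I(x) dx ≥ 2^{-n} for a fixed measurable set F of finite measure and χ̃_I(x) = (1+dist(x,I)/|I|)^{-10}. Then every I ∈ 𝓘 is contained in {x : M(1_F)(x) ≥ c·2^{-n}} for an absolute constant c > 0, and consequently ∑_{I∈𝓘} |I| ≤ C · 2^n |F|. -/

import Mathlib

open MeasureTheory

/-- The Hardy–Littlewood maximal function over intervals on `ℝ`. -/
noncomputable def hlMaximal (g : ℝ → ℝ) (y : ℝ) : ℝ :=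
  ⨆ (p : ℝ × ℝ) (_ : p.1 < p.2) (_ : y ∈ Set.Icc p.1 p.2),
    (p.2 - p.1)⁻¹ * ∫ x in Set.Icc p.1 p.2, |g x|

/-!
Write `I = [a, b]` and let `J_k` be `I` enlarged by `(k + 1)|I|` on both sides, so that
`|J_k| = (2k + 3)|I|` and `χ̃_I ≤ ∑ₖ (k + 1)^{-10} 1_{J_k}`. Since
`∑ₖ (2k + 3)(k + 1)^{-10} ≤ 6`, the bound `2^{-n}|I| ≤ ∫ 1_F χ̃_I` forces some `J = J_k ⊇ I`
with `|F ∩ J| ≥ 2^{-n}|J| / 12`. Averaging `1_F` over `J` gives `M(1_F) ≥ 2^{-n} / 12` on `I`.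
By the Vitali covering lemma a disjoint subfamily of these `J` has fourfold enlargements covering
`⋃ I`, so `∑ |I| ≤ 4 ∑ |J| ≤ 48 · 2^n ∑ |F ∩ J| ≤ 48 · 2^n |F|`.
-/

open Function Metric Set Module
open scoped ENNReal

theorem average_abs_le_hlMaximal {g : ℝ → ℝ} {K : ℝ} (hK : 0 ≤ K) (hg : ∀ x, |g x| ≤ K)
    {A B y : ℝ} (hAB : A < B) (hy : y ∈ Icc A B) :
    (B - A)⁻¹ * ∫ x in Icc A B, |g x| ≤ hlMaximal g y := by
  have average_le : ∀ p : ℝ × ℝ, p.1 < p.2 →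
      (p.2 - p.1)⁻¹ * ∫ x in Icc p.1 p.2, |g x| ≤ K := fun p hp => by
    have := norm_setIntegral_le_of_norm_le_const (μ := volume) (s := Icc p.1 p.2)
      (f := fun x => |g x|) measure_Icc_lt_top fun x _ => (norm_abs_eq_norm (g x)).trans_le (hg x)
    rw [Real.volume_real_Icc_of_le hp.le] at this
    rw [inv_mul_le_iff₀ (sub_pos.2 hp)]
    exact (Real.le_norm_self _).trans (this.trans_eq (mul_comm _ _))
  have hbdd : BddAbove (range fun p : ℝ × ℝ => ⨆ (_ : p.1 < p.2) (_ : y ∈ Icc p.1 p.2),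
      (p.2 - p.1)⁻¹ * ∫ x in Icc p.1 p.2, |g x|) :=
    ⟨K, forall_mem_range.2 fun p =>
      Real.iSup_le (fun hp => Real.iSup_le (fun _ => average_le p hp) hK) hK⟩
  refine le_ciSup_of_le hbdd (A, B) ?_
  rw [ciSup_pos (show (A, B).1 < (A, B).2 from hAB),
    ciSup_pos (show y ∈ Icc (A, B).1 (A, B).2 from hy)]

theorem le_hlMaximal_indicator_of_le_measure_inter {F : Set ℝ} (hF : MeasurableSet F)
    {c r δ y : ℝ} (hr : 0 < r) (hy : y ∈ closedBall c r)
    (hdense : ENNReal.ofReal δ * volume (closedBall c r) ≤ volume (F ∩ closedBall c r)) :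
    δ ≤ hlMaximal (F.indicator fun _ => (1 : ℝ)) y := by
  have hmeasure : δ * (2 * r) ≤ (volume (F ∩ closedBall c r)).toReal := by
    rwa [Real.volume_closedBall, ← ENNReal.ofReal_mul' (by positivity),
      ENNReal.ofReal_le_iff_le_toReal
        (measure_ne_top_of_subset inter_subset_right measure_closedBall_lt_top.ne)] at hdense
  rw [Real.closedBall_eq_Icc] at hy hmeasure
  have habs : (fun x => |F.indicator (fun _ => (1 : ℝ)) x|) = F.indicator fun _ => 1 := by
    ext x; by_cases hx : x ∈ F <;> simp [hx]
  refine le_trans ?_ (average_abs_le_hlMaximal zero_le_one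
    (fun x => by by_cases hx : x ∈ F <;> simp [hx]) (by linarith) hy)
  rwa [habs, setIntegral_indicator hF, setIntegral_const, smul_eq_mul, mul_one, inter_comm,
    measureReal_def, show c + r - (c - r) = 2 * r by ring, le_inv_mul_iff₀ (by positivity),
    mul_comm]

theorem mul_measure_iUnion_closedBall_le {E ι : Type*} [NormedAddCommGroup E] [NormedSpace ℝ E]
    [FiniteDimensional ℝ E] [MeasurableSpace E] [BorelSpace E] (μ : Measure E)
    [μ.IsAddHaarMeasure] [Countable ι] {F : Set E} (hF : MeasurableSet F) {δ : ℝ≥0∞}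
    {c : ι → E} {r : ι → ℝ} (hr : BddAbove (range r))
    (hdense : ∀ i, δ * μ (closedBall (c i) (r i)) ≤ μ (F ∩ closedBall (c i) (r i))) :
    δ * μ (⋃ i, closedBall (c i) (r i)) ≤ 4 ^ finrank ℝ E * μ F := by
  obtain ⟨R, hR⟩ := hr
  obtain ⟨u, -, hdisj, hcover⟩ := Vitali.exists_disjoint_subfamily_covering_enlargement_closedBall
    univ c r R (fun i _ => hR (mem_range_self i)) 4 (by norm_num)
  have hu : u.Countable := u.to_countable
  have measure_four_mul : ∀ j, μ (closedBall (c j) (4 * r j)) =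
      4 ^ finrank ℝ E * μ (closedBall (c j) (r j)) := fun j => by
    rw [Measure.addHaar_closedBall_mul_of_pos μ _ four_pos,
      ← Measure.addHaar_closedBall_center μ (c j), ENNReal.ofReal_pow zero_le_four,
      ENNReal.ofReal_ofNat]
  calc δ * μ (⋃ i, closedBall (c i) (r i))
      ≤ δ * μ (⋃ j ∈ u, closedBall (c j) (4 * r j)) := by
        refine mul_le_mul_right (measure_mono (iUnion_subset fun i => ?_)) δ
        obtain ⟨j, hj, hsub⟩ := hcover i (mem_univ i)
        exact hsub.trans (subset_biUnion_of_mem (u := fun j => closedBall (c j) (4 * r j)) hj)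
    _ ≤ δ * ∑' j : u, μ (closedBall (c j) (4 * r j)) :=
        mul_le_mul_right (measure_biUnion_le μ hu _) δ
    _ = 4 ^ finrank ℝ E * ∑' j : u, δ * μ (closedBall (c j) (r j)) := by
        simp_rw [measure_four_mul, ← ENNReal.tsum_mul_left, mul_left_comm]
    _ ≤ 4 ^ finrank ℝ E * ∑' j : u, μ (F ∩ closedBall (c j) (r j)) := by
        gcongr with j; exact hdense j
    _ = 4 ^ finrank ℝ E * μ (⋃ j ∈ u, F ∩ closedBall (c j) (r j)) := by
        rw [measure_biUnion hu (hdisj.mono fun j => inter_subset_right)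
          fun j _ => hF.inter measurableSet_closedBall]
    _ ≤ 4 ^ finrank ℝ E * μ F := by
        gcongr; exact iUnion₂_subset fun j _ => inter_subset_left

theorem tsum_ofReal_two_mul_add_three_mul_rpow_le_six :
    ∑' k : ℕ, ENNReal.ofReal ((2 * k + 3) * ((k : ℝ) + 1) ^ (-(10 : ℝ))) ≤ 6 := by
  have term_le : ∀ x : ℝ, 1 ≤ x → (2 * x + 1) * x ^ (-(10 : ℝ)) ≤ 6 / x - 6 / (x + 1) := by
    intro x hx
    rw [Real.rpow_neg (by linarith), div_sub_div _ _ (by positivity) (by positivity),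
      ← div_eq_mul_inv, div_le_div_iff₀ (by positivity) (by positivity)]
    norm_cast
    have hpow : x ^ 3 ≤ x ^ 10 := pow_le_pow_right₀ hx (by norm_num)
    have hcubic : (2 * x + 1) * (x * (x + 1)) ≤ 6 * x ^ 3 := by
      nlinarith [pow_le_pow_right₀ hx (show 1 ≤ 2 by norm_num),
        pow_le_pow_right₀ hx (show 2 ≤ 3 by norm_num)]
    nlinarith
  have partial_le : ∀ n : ℕ,
      ∑ k ∈ Finset.range n, (2 * k + 3) * ((k : ℝ) + 1) ^ (-(10 : ℝ)) ≤ 6 - 6 / ((n : ℝ) + 1) := by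
    intro n
    induction n with
    | zero => norm_num
    | succ n ih =>
      rw [Finset.sum_range_succ]
      have := term_le ((n : ℝ) + 1) (by linarith [n.cast_nonneg (α := ℝ)])
      push_cast
      linarith
  refine ENNReal.tsum_le_of_sum_range_le fun n => ?_
  rw [← ENNReal.ofReal_sum_of_nonneg fun k _ => by positivity, ← ENNReal.ofReal_ofNat]
  exact ENNReal.ofReal_le_ofReal ((partial_le n).trans (sub_le_self _ (by positivity)))

def enlargedBall (a b : ℝ) (k : ℕ) : Set ℝ :=
  closedBall ((a + b) / 2) ((k + 1) * (b - a) + (b - a) / 2)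

theorem volume_enlargedBall (a b : ℝ) (k : ℕ) :
    volume (enlargedBall a b k) = ENNReal.ofReal ((2 * k + 3) * (b - a)) := by
  rw [enlargedBall, Real.volume_closedBall]
  ring_nf

theorem Icc_subset_enlargedBall {a b : ℝ} (hab : a ≤ b) (k : ℕ) :
    Icc a b ⊆ enlargedBall a b k := by
  rw [Real.Icc_eq_closedBall]
  exact closedBall_subset_closedBall (by nlinarith [k.cast_nonneg (α := ℝ)])

theorem measurableSet_enlargedBall (a b : ℝ) (k : ℕ) : MeasurableSet (enlargedBall a b k) :=
  measurableSet_closedBall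

theorem one_add_infDist_div_pos {a b : ℝ} (hab : a < b) (x : ℝ) :
    0 < 1 + infDist x (Icc a b) / (b - a) := by
  have := div_nonneg (infDist_nonneg (x := x) (s := Icc a b)) (sub_pos.2 hab).le
  linarith

theorem ofReal_weight_le_tsum_indicator {a b : ℝ} (hab : a < b) (x : ℝ) :
    ENNReal.ofReal ((1 + infDist x (Icc a b) / (b - a)) ^ (-(10 : ℝ))) ≤
      ∑' k : ℕ, (enlargedBall a b k).indicator
        (fun _ => ENNReal.ofReal (((k : ℝ) + 1) ^ (-(10 : ℝ)))) x := by
  have hL : 0 < b - a := sub_pos.2 hab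
  set k := ⌊infDist x (Icc a b) / (b - a)⌋₊
  have hk : (k : ℝ) ≤ infDist x (Icc a b) / (b - a) :=
    Nat.floor_le (div_nonneg infDist_nonneg hL.le)
  have hmem : x ∈ enlargedBall a b k := by
    have hlt : infDist x (Icc a b) < (k + 1) * (b - a) := by
      rw [← div_lt_iff₀ hL]; exact Nat.lt_floor_add_one _
    rw [← mem_thickening_iff_infDist_lt (nonempty_Icc.2 hab.le), Real.Icc_eq_closedBall,
      thickening_closedBall (by positivity) (by positivity)] at hlt
    exact ball_subset_closedBall hlt
  refine le_trans ?_ (ENNReal.le_tsum k)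
  rw [indicator_of_mem hmem]
  exact ENNReal.ofReal_le_ofReal
    (Real.rpow_le_rpow_of_nonpos (by positivity) (by linarith) (by norm_num))

theorem setLIntegral_ofReal_weight_le_tsum {a b : ℝ} (hab : a < b) (F : Set ℝ) :
    ∫⁻ x in F, ENNReal.ofReal ((1 + infDist x (Icc a b) / (b - a)) ^ (-(10 : ℝ))) ≤
      ∑' k : ℕ, ENNReal.ofReal (((k : ℝ) + 1) ^ (-(10 : ℝ))) *
        volume (F ∩ enlargedBall a b k) :=
  calc _ ≤ ∫⁻ x in F, ∑' k : ℕ, (enlargedBall a b k).indicator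
          (fun _ => ENNReal.ofReal (((k : ℝ) + 1) ^ (-(10 : ℝ)))) x :=
        lintegral_mono (ofReal_weight_le_tsum_indicator hab)
    _ = _ := by
        rw [lintegral_tsum fun k =>
          (measurable_const.indicator (measurableSet_enlargedBall a b k)).aemeasurable]
        refine tsum_congr fun k => ?_
        rw [lintegral_indicator_const (measurableSet_enlargedBall a b k),
          Measure.restrict_apply (measurableSet_enlargedBall a b k), inter_comm]

theorem exists_closedBall_of_le_weighted_average {F : Set ℝ} (hF : MeasurableSet F)
    {a b t : ℝ} (hab : a < b) (ht : 0 < t)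
    (h : t ≤ (b - a)⁻¹ * ∫ x, F.indicator (fun _ => (1 : ℝ)) x *
      (1 + infDist x (Icc a b) / (b - a)) ^ (-(10 : ℝ))) :
    ∃ c r, 0 < r ∧ Icc a b ⊆ closedBall c r ∧
      ENNReal.ofReal (t / 12) * volume (closedBall c r) ≤ volume (F ∩ closedBall c r) := by
  by_contra! hsparse
  set w : ℝ → ℝ := fun x => (1 + infDist x (Icc a b) / (b - a)) ^ (-(10 : ℝ))
  have hL : 0 < b - a := sub_pos.2 hab
  have hsparse_enlarged : ∀ k : ℕ, volume (F ∩ enlargedBall a b k) ≤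
      ENNReal.ofReal (t / 12 * ((2 * k + 3) * (b - a))) := fun k => by
    rw [ENNReal.ofReal_mul (by positivity), ← volume_enlargedBall]
    exact (hsparse _ _ (by positivity) (Icc_subset_enlargedBall hab.le k)).le
  have hlint : ∫⁻ x in F, ENNReal.ofReal (w x) ≤ ENNReal.ofReal (t * (b - a) / 2) := calc
    _ ≤ ∑' k : ℕ, ENNReal.ofReal (((k : ℝ) + 1) ^ (-(10 : ℝ))) *
          volume (F ∩ enlargedBall a b k) := setLIntegral_ofReal_weight_le_tsum hab F
    _ ≤ ∑' k : ℕ, ENNReal.ofReal (t * (b - a) / 12) *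
          ENNReal.ofReal ((2 * k + 3) * ((k : ℝ) + 1) ^ (-(10 : ℝ))) := by
        refine ENNReal.tsum_le_tsum fun k =>
          (mul_le_mul_right (hsparse_enlarged k) _).trans_eq ?_
        rw [← ENNReal.ofReal_mul (by positivity), ← ENNReal.ofReal_mul (by positivity)]
        ring_nf
    _ ≤ ENNReal.ofReal (t * (b - a) / 12) * 6 := by
        rw [ENNReal.tsum_mul_left]
        exact mul_le_mul_right tsum_ofReal_two_mul_add_three_mul_rpow_le_six _
    _ = ENNReal.ofReal (t * (b - a) / 2) := by
        rw [← ENNReal.ofReal_ofNat, ← ENNReal.ofReal_mul (by positivity)]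
        ring_nf
  have hint : ∫ x, F.indicator (fun _ => (1 : ℝ)) x * w x =
      (∫⁻ x in F, ENNReal.ofReal (w x)).toReal := by
    have : (fun x => F.indicator (fun _ => (1 : ℝ)) x * w x) = F.indicator w := by
      ext x; by_cases hx : x ∈ F <;> simp [hx]
    rw [this, integral_indicator hF, integral_eq_lintegral_of_nonneg_ae
      (ae_of_all _ fun x => Real.rpow_nonneg (one_add_infDist_div_pos hab x).le _)]
    exact ((continuous_const.add ((continuous_infDist_pt _).div_const _)).rpow_const
      fun x => Or.inl (one_add_infDist_div_pos hab x).ne').aestronglyMeasurable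
  have : t * (b - a) ≤ t * (b - a) / 2 := calc
    t * (b - a) ≤ ∫ x, F.indicator (fun _ => (1 : ℝ)) x * w x := by
      rwa [le_inv_mul_iff₀ hL, mul_comm] at h
    _ ≤ t * (b - a) / 2 := by
      rw [hint]; exact ENNReal.toReal_le_of_le_ofReal (by positivity) hlint
  linarith [mul_pos ht hL]

theorem ofReal_sum_sub_eq_volume_iUnion_Icc {ι : Type*} [Fintype ι] {a b : ι → ℝ}
    (hab : ∀ i, a i ≤ b i) (hdisj : Pairwise (Disjoint on fun i => Icc (a i) (b i))) :
    ENNReal.ofReal (∑ i, (b i - a i)) = volume (⋃ i, Icc (a i) (b i)) := by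
  rw [measure_iUnion hdisj fun _ => measurableSet_Icc, tsum_fintype,
    ENNReal.ofReal_sum_of_nonneg fun i _ => sub_nonneg.2 (hab i)]
  simp_rw [Real.volume_Icc]

/-- Counting the stopping-time intervals (inequality (6.8)): there are absolute
constants `c, C > 0` such that for any finite family of pairwise disjoint
intervals `I_i = [a_i, b_i]` each satisfying
`(1/|I|) ∫ 1_F χ̃_I ≥ 2^{-n}` with `χ̃_I(x) = (1 + dist(x,I)/|I|)^{-10}`,
every `I_i` lies in `{M(1_F) ≥ c 2^{-n}}` and `∑_i |I_i| ≤ C 2^n |F|`. -/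
theorem stmt18 :
    ∃ c > (0 : ℝ), ∃ C > (0 : ℝ),
      ∀ (F : Set ℝ), MeasurableSet F → volume F < ⊤ →
      ∀ (n : ℤ) (ι : Type) (_ : Fintype ι) (a b : ι → ℝ),
        (∀ i, a i < b i) →
        (Set.univ.PairwiseDisjoint fun i => Set.Icc (a i) (b i)) →
        (∀ i, (2 : ℝ) ^ (-n) ≤ (b i - a i)⁻¹ *
          ∫ x : ℝ, F.indicator (fun _ => (1 : ℝ)) x *
            (1 + Metric.infDist x (Set.Icc (a i) (b i)) / (b i - a i)) ^ (-(10 : ℝ))) →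
        (∀ i, Set.Icc (a i) (b i) ⊆
            {x : ℝ | c * (2 : ℝ) ^ (-n) ≤
              hlMaximal (F.indicator (fun _ => (1 : ℝ))) x}) ∧
          ∑ i, (b i - a i) ≤ C * (2 : ℝ) ^ n * (volume F).toReal := by
  refine ⟨1 / 12, by norm_num, 48, by norm_num, fun F hF hFfin n ι _ a b hab hdisj hlow => ?_⟩
  have ht : (0 : ℝ) < 2 ^ (-n) := by positivity
  choose c r hr hsub hdense using fun i =>
    exists_closedBall_of_le_weighted_average hF (hab i) ht (hlow i)
  refine ⟨fun i y hy => ?_, ?_⟩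
  · rw [one_div_mul_eq_div]
    exact le_hlMaximal_indicator_of_le_measure_inter hF (hr i) (hsub i hy) (hdense i)
  have hcover := mul_measure_iUnion_closedBall_le volume hF (finite_range r).bddAbove hdense
  rw [finrank_self, pow_one] at hcover
  have hsum : 2 ^ (-n) / 12 * ∑ i, (b i - a i) ≤ 4 * (volume F).toReal := by
    rw [← ENNReal.toReal_ofNat 4, ← ENNReal.toReal_mul, ← ENNReal.ofReal_le_iff_le_toReal
      (ENNReal.mul_ne_top (by simp) hFfin.ne), ENNReal.ofReal_mul (by positivity),
      ofReal_sum_sub_eq_volume_iUnion_Icc (fun i => (hab i).le) (pairwise_univ.1 hdisj)]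
    exact (mul_le_mul_right (measure_mono (iUnion_mono hsub)) _).trans hcover
  calc ∑ i, (b i - a i) = 12 * 2 ^ n * (2 ^ (-n) / 12 * ∑ i, (b i - a i)) := by
        rw [zpow_neg]; field_simp
    _ ≤ 12 * 2 ^ n * (4 * (volume F).toReal) := by gcongr
    _ = 48 * 2 ^ n * (volume F).toReal := by ring
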